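/- Let 0 < k < n be integers, let κ_1 < κ_2 < ⋯ < κ_n be real numbers, and let A be a real k×n matrix of rank k that is totally nonnegative. Then the multiline-soliton function u(x,y,t) = 2 ∂_x² log τ(x,y,t) is a well-defined real-valued function of class C^∞ on all of ℝ³. -/

import Mathlib

open scoped BigOperators

/-- The maximal minor `Δ_I(A)` of a real `k × n` matrix `A` on the column set `I`
(columns taken in increasing order); junk value `0` if `I` does not have `k` elements. -/
noncomputable def kpMinor (k n : ℕ) (A : Matrix (Fin k) (Fin n) ℝ) (I : Finset (Fin n)) : ℝ :=
  if h : I.card = k then (A.submatrix id fun a => I.orderEmbOfFin h a).det else 0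

/-- `A` is totally nonnegative: all maximal minors are nonnegative. -/
def TotallyNonneg (k n : ℕ) (A : Matrix (Fin k) (Fin n) ℝ) : Prop :=
  ∀ I : Finset (Fin n), I.card = k → 0 ≤ kpMinor k n A I

/-- The Vandermonde factor `∏_{a<b} (κ_{i_b} - κ_{i_a})` attached to a `k`-element
column set `I = {i_1 < ⋯ < i_k}`. -/
noncomputable def kpVdm (k n : ℕ) (κ : Fin n → ℝ) (I : Finset (Fin n)) : ℝ :=
  if h : I.card = k then
    ∏ p ∈ Finset.univ.filter fun p : Fin k × Fin k => p.1 < p.2,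
      (κ (I.orderEmbOfFin h p.2) - κ (I.orderEmbOfFin h p.1))
  else 0

/-- The KP-II tau function of the data `(κ, A)`:
`τ(x,y,t) = Σ_I Δ_I(A) ∏_{a<b}(κ_{i_b}-κ_{i_a}) exp(Σ_{i∈I} (κ_i x + κ_i² y + κ_i³ t))`. -/
noncomputable def kpTau (k n : ℕ) (κ : Fin n → ℝ) (A : Matrix (Fin k) (Fin n) ℝ)
    (x y t : ℝ) : ℝ :=
  ∑ I ∈ Finset.powersetCard k (Finset.univ : Finset (Fin n)),
    kpMinor k n A I * kpVdm k n κ I *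
      Real.exp (∑ i ∈ I, (κ i * x + κ i ^ 2 * y + κ i ^ 3 * t))

/-- The multiline-soliton function `u(x,y,t) = 2 ∂_x² log τ(x,y,t)` of the data `(κ, A)`. -/
noncomputable def kpU (k n : ℕ) (κ : Fin n → ℝ) (A : Matrix (Fin k) (Fin n) ℝ)
    (x y t : ℝ) : ℝ :=
  2 * iteratedDeriv 2 (fun x' => Real.log (kpTau k n κ A x' y t)) x

/- ### Auxiliary machinery -/

open Matrix in
/-- From full row rank, extract a column set with nonzero maximal minor. -/
theorem kp_exists_minor_ne_zero (k n : ℕ) (A : Matrix (Fin k) (Fin n) ℝ)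
    (hrank : A.rank = k) :
    ∃ I : Finset (Fin n), I.card = k ∧ kpMinor k n A I ≠ 0 := by
  classical
  have hspan : Submodule.span ℝ (Set.range Aᵀ) = ⊤ := by
    apply Submodule.eq_top_of_finrank_eq
    rw [show Set.range Aᵀ = Set.range A.col from rfl, ← Matrix.rank_eq_finrank_span_cols, hrank, Module.finrank_fintype_fun_eq_card,
      Fintype.card_fin]
  obtain ⟨s, hs_sub, hs_span, hs_li⟩ := exists_linearIndependent ℝ (Set.range Aᵀ)
  have hsfin : s.Finite := (Set.finite_range _).subset hs_sub
  haveI : Fintype s := hsfin.fintype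
  have hcard : s.toFinset.card = k := by
    have := finrank_span_set_eq_card hs_li
    rw [hs_span, hspan] at this
    rw [← this, finrank_top, Module.finrank_fintype_fun_eq_card, Fintype.card_fin]
  have hchoice : ∀ v ∈ s, ∃ j : Fin n, Aᵀ j = v := fun v hv => hs_sub hv
  choose g hg using hchoice
  let I : Finset (Fin n) := s.toFinset.attach.image (fun v => g v.1 (Set.mem_toFinset.mp v.2))
  have hginj : ∀ v₁ (h₁ : v₁ ∈ s) v₂ (h₂ : v₂ ∈ s), g v₁ h₁ = g v₂ h₂ → v₁ = v₂ := by
    intro v₁ h₁ v₂ h₂ h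
    rw [← hg v₁ h₁, ← hg v₂ h₂, h]
  have hIcard : I.card = k := by
    rw [← hcard, ← Finset.card_attach (s := s.toFinset)]
    apply Finset.card_image_of_injective
    intro a b hab
    exact Subtype.ext (hginj _ _ _ _ hab)
  refine ⟨I, hIcard, ?_⟩
  rw [kpMinor, dif_pos hIcard]
  set M := A.submatrix id fun a => I.orderEmbOfFin hIcard a with hM
  have hcolmem : ∀ a : Fin k, Mᵀ a ∈ s := by
    intro a
    have hmem : I.orderEmbOfFin hIcard a ∈ I := Finset.orderEmbOfFin_mem I hIcard a
    obtain ⟨v, _, hv⟩ := Finset.mem_image.mp hmem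
    have : Mᵀ a = Aᵀ (I.orderEmbOfFin hIcard a) := rfl
    rw [this, ← hv, hg]
    exact Set.mem_toFinset.mp v.2
  let φ : Fin k → s := fun a => ⟨Mᵀ a, hcolmem a⟩
  have hφinj : Function.Injective φ := by
    intro a b hab
    have hMcol : ∀ c : Fin k, Mᵀ c = Aᵀ (I.orderEmbOfFin hIcard c) := fun _ => rfl
    have h1 : Mᵀ a = Mᵀ b := Subtype.ext_iff.mp hab
    have hmema : I.orderEmbOfFin hIcard a ∈ I := Finset.orderEmbOfFin_mem I hIcard a
    have hmemb : I.orderEmbOfFin hIcard b ∈ I := Finset.orderEmbOfFin_mem I hIcard b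
    obtain ⟨va, _, hva⟩ := Finset.mem_image.mp hmema
    obtain ⟨vb, _, hvb⟩ := Finset.mem_image.mp hmemb
    have ha' : Aᵀ (I.orderEmbOfFin hIcard a) = va.1 := by rw [← hva, hg]
    have hb' : Aᵀ (I.orderEmbOfFin hIcard b) = vb.1 := by rw [← hvb, hg]
    have : va.1 = vb.1 := by rw [← ha', ← hb', ← hMcol, ← hMcol, h1]
    have hva' : I.orderEmbOfFin hIcard a = I.orderEmbOfFin hIcard b := by
      have hvv : va = vb := Subtype.ext this
      rw [← hva, ← hvb]
      subst hvv
      rfl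
    exact (I.orderEmbOfFin hIcard).injective hva'
  have hli : LinearIndependent ℝ (fun a => Mᵀ a) := by
    have : (fun a => Mᵀ a) = (fun v : s => (v : Fin k → ℝ)) ∘ φ := rfl
    rw [this]
    exact hs_li.comp φ hφinj
  have hunit : IsUnit M := Matrix.linearIndependent_cols_iff_isUnit.mp hli
  exact ((Matrix.isUnit_iff_isUnit_det M).mp hunit).ne_zero

/-- The Vandermonde factor is positive when the phases are strictly increasing. -/
theorem kpVdm_pos {k n : ℕ} {κ : Fin n → ℝ} (hκ : StrictMono κ) {I : Finset (Fin n)}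
    (h : I.card = k) : 0 < kpVdm k n κ I := by
  rw [kpVdm, dif_pos h]
  apply Finset.prod_pos
  intro p hp
  have hlt : p.1 < p.2 := (Finset.mem_filter.mp hp).2
  exact sub_pos.mpr (hκ ((I.orderEmbOfFin h).strictMono hlt))

/-- The `c`-th x-derivative of the tau function. -/
noncomputable def kpTauD (k n : ℕ) (κ : Fin n → ℝ) (A : Matrix (Fin k) (Fin n) ℝ)
    (c : ℕ) (x y t : ℝ) : ℝ :=
  ∑ I ∈ Finset.powersetCard k (Finset.univ : Finset (Fin n)),
    kpMinor k n A I * kpVdm k n κ I * (∑ i ∈ I, κ i) ^ c *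
      Real.exp (∑ i ∈ I, (κ i * x + κ i ^ 2 * y + κ i ^ 3 * t))

theorem kpTauD_zero (k n : ℕ) (κ : Fin n → ℝ) (A : Matrix (Fin k) (Fin n) ℝ)
    (x y t : ℝ) : kpTauD k n κ A 0 x y t = kpTau k n κ A x y t := by
  unfold kpTauD kpTau
  simp [pow_zero, mul_one]

theorem kpTauD_hasDerivAt (k n : ℕ) (κ : Fin n → ℝ) (A : Matrix (Fin k) (Fin n) ℝ)
    (c : ℕ) (y t x : ℝ) :
    HasDerivAt (fun x' => kpTauD k n κ A c x' y t) (kpTauD k n κ A (c+1) x y t) x := by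
  unfold kpTauD
  apply HasDerivAt.fun_sum
  intro I _
  have hexp : ∀ x' : ℝ, (∑ i ∈ I, (κ i * x' + κ i ^ 2 * y + κ i ^ 3 * t))
      = (∑ i ∈ I, κ i) * x' + (∑ i ∈ I, (κ i ^ 2 * y + κ i ^ 3 * t)) := by
    intro x'
    rw [Finset.sum_mul, ← Finset.sum_add_distrib]
    congr 1
    ext i
    ring
  simp only [hexp]
  have h1 : HasDerivAt (fun x' : ℝ => (∑ i ∈ I, κ i) * x' + (∑ i ∈ I, (κ i ^ 2 * y + κ i ^ 3 * t)))
      (∑ i ∈ I, κ i) x := by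
    simpa using ((hasDerivAt_id x).const_mul (∑ i ∈ I, κ i)).add_const (∑ i ∈ I, (κ i ^ 2 * y + κ i ^ 3 * t))
  have h2 := (h1.exp).const_mul (kpMinor k n A I * kpVdm k n κ I * (∑ i ∈ I, κ i) ^ c)
  refine h2.congr_deriv ?_
  ring

theorem kpTauD_contDiff (k n : ℕ) (κ : Fin n → ℝ) (A : Matrix (Fin k) (Fin n) ℝ) (c : ℕ) :
    ContDiff ℝ (⊤ : ℕ∞) (fun p : ℝ × ℝ × ℝ => kpTauD k n κ A c p.1 p.2.1 p.2.2) := by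
  unfold kpTauD
  apply ContDiff.sum
  intro I _
  refine ContDiff.mul contDiff_const ?_
  apply ContDiff.exp
  apply ContDiff.sum
  intro i _
  exact ((contDiff_const.mul contDiff_fst).add (contDiff_const.mul contDiff_snd.fst)).add
    (contDiff_const.mul contDiff_snd.snd)

/-- for `0 < k < n`, strictly increasing phases, and a totally nonnegative
`k × n` matrix of rank `k`, the multiline-soliton function `u = 2 ∂_x² log τ` is well
defined (the tau function is everywhere positive) and is a `C^∞` real-valued function on
all of `ℝ³`. -/
theorem kpU_smooth (k n : ℕ) (hk : 0 < k) (hkn : k < n)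
    (κ : Fin n → ℝ) (hκ : StrictMono κ)
    (A : Matrix (Fin k) (Fin n) ℝ) (hrank : A.rank = k) (hA : TotallyNonneg k n A) :
    (∀ x y t : ℝ, 0 < kpTau k n κ A x y t) ∧
    ContDiff ℝ (⊤ : ℕ∞) (fun p : ℝ × ℝ × ℝ => kpU k n κ A p.1 p.2.1 p.2.2) := by
  obtain ⟨I₀, hI₀card, hI₀ne⟩ := kp_exists_minor_ne_zero k n A hrank
  have hI₀pos : 0 < kpMinor k n A I₀ := lt_of_le_of_ne (hA I₀ hI₀card) (Ne.symm hI₀ne)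
  have hpos : ∀ x y t : ℝ, 0 < kpTau k n κ A x y t := by
    intro x y t
    unfold kpTau
    apply Finset.sum_pos'
    · intro I hI
      have hIc : I.card = k := (Finset.mem_powersetCard_univ).mp hI
      exact mul_nonneg (mul_nonneg (hA I hIc) (kpVdm_pos hκ hIc).le) (Real.exp_pos _).le
    · exact ⟨I₀, Finset.mem_powersetCard_univ.mpr hI₀card,
        mul_pos (mul_pos hI₀pos (kpVdm_pos hκ hI₀card)) (Real.exp_pos _)⟩
  refine ⟨hpos, ?_⟩
  -- explicit formula for u
  have key : ∀ x y t : ℝ, kpU k n κ A x y t =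
      2 * ((kpTauD k n κ A 2 x y t * kpTau k n κ A x y t - kpTauD k n κ A 1 x y t *
        kpTauD k n κ A 1 x y t) / kpTau k n κ A x y t ^ 2) := by
    intro x y t
    unfold kpU
    rw [show (2 : ℕ) = 1 + 1 from rfl, iteratedDeriv_succ, iteratedDeriv_one]
    have htau : ∀ x' : ℝ, HasDerivAt (fun x'' => kpTau k n κ A x'' y t)
        (kpTauD k n κ A 1 x' y t) x' := by
      intro x'
      have := kpTauD_hasDerivAt k n κ A 0 y t x'
      simpa only [kpTauD_zero] using this
    have hlog : ∀ x' : ℝ, HasDerivAt (fun x'' => Real.log (kpTau k n κ A x'' y t))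
        (kpTauD k n κ A 1 x' y t / kpTau k n κ A x' y t) x' := fun x' =>
      (htau x').log (ne_of_gt (hpos x' y t))
    have hderiv_eq : deriv (fun x'' => Real.log (kpTau k n κ A x'' y t))
        = fun x' => kpTauD k n κ A 1 x' y t / kpTau k n κ A x' y t :=
      funext fun x' => (hlog x').deriv
    rw [hderiv_eq]
    have hdiv := (kpTauD_hasDerivAt k n κ A 1 y t x).div (htau x) (ne_of_gt (hpos x y t))
    rw [show (fun x' => kpTauD k n κ A 1 x' y t / kpTau k n κ A x' y t) =
        ((fun x' => kpTauD k n κ A 1 x' y t) / fun x'' => kpTau k n κ A x'' y t) from rfl, hdiv.deriv]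
  have hF : ContDiff ℝ (⊤ : ℕ∞) (fun p : ℝ × ℝ × ℝ =>
      2 * ((kpTauD k n κ A 2 p.1 p.2.1 p.2.2 * kpTauD k n κ A 0 p.1 p.2.1 p.2.2 -
        kpTauD k n κ A 1 p.1 p.2.1 p.2.2 * kpTauD k n κ A 1 p.1 p.2.1 p.2.2) /
        kpTauD k n κ A 0 p.1 p.2.1 p.2.2 ^ 2)) := by
    refine ContDiff.mul contDiff_const ?_
    refine ContDiff.div ?_ ?_ ?_
    · exact ((kpTauD_contDiff k n κ A 2).mul (kpTauD_contDiff k n κ A 0)).sub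
        ((kpTauD_contDiff k n κ A 1).mul (kpTauD_contDiff k n κ A 1))
    · exact (kpTauD_contDiff k n κ A 0).pow 2
    · intro p
      apply pow_ne_zero
      rw [kpTauD_zero]
      exact ne_of_gt (hpos p.1 p.2.1 p.2.2)
  have heq : (fun p : ℝ × ℝ × ℝ => kpU k n κ A p.1 p.2.1 p.2.2) =
      (fun p : ℝ × ℝ × ℝ =>
        2 * ((kpTauD k n κ A 2 p.1 p.2.1 p.2.2 * kpTauD k n κ A 0 p.1 p.2.1 p.2.2 -
          kpTauD k n κ A 1 p.1 p.2.1 p.2.2 * kpTauD k n κ A 1 p.1 p.2.1 p.2.2) /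
          kpTauD k n κ A 0 p.1 p.2.1 p.2.2 ^ 2)) := by
    funext p
    rw [key p.1 p.2.1 p.2.2, kpTauD_zero]
  rw [heq]
  exact hF
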